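/- Let R be a 3×3 completely-S matrix with unit diagonal and let θ ∈ ℝ³ have each component θ_i ∈ {−1, 0, 1}. If LCP(θ,R) has a solution in Category IV, then LCP(θ,R) also has a solution in Category I or a solution in Category II (or both). -/

import Mathlib

open Matrix

/-- `(u, v)` is a solution of the linear complementarity problem LCP(θ, R). -/
def IsLCPSolution {d : ℕ} (θ : Fin d → ℝ) (R : Matrix (Fin d) (Fin d) ℝ)
    (u v : Fin d → ℝ) : Prop :=
  (∀ i, 0 ≤ u i) ∧ (∀ i, 0 ≤ v i) ∧ v = θ + R.mulVec u ∧ u ⬝ᵥ v = 0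

/-- `R` is a completely-S matrix: every principal submatrix of `R` is an S-matrix. -/
def CompletelyS {d : ℕ} (R : Matrix (Fin d) (Fin d) ℝ) : Prop :=
  ∀ s : Finset (Fin d), s.Nonempty →
    ∃ w : Fin d → ℝ, (∀ i, 0 ≤ w i) ∧ (∀ i, i ∉ s → w i = 0) ∧
      ∀ i ∈ s, 0 < R.mulVec w i

/-- Category I: exactly two components of `v` are positive, and the complementary
component of `u` is positive. -/
def CategoryI (θ : Fin 3 → ℝ) (R : Matrix (Fin 3) (Fin 3) ℝ) : Prop :=
  ∃ u v : Fin 3 → ℝ, IsLCPSolution θ R u v ∧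
    ∃ i : Fin 3, 0 < u i ∧ v i = 0 ∧ ∀ j, j ≠ i → 0 < v j

/-- Category II: exactly one component of `v` is positive (say component `k`, with
`v` vanishing at the two other coordinates `j₁, j₂`), the 2×2 principal submatrix
`R̂` of `R` indexed by `j₁, j₂` has positive determinant, and the two complementary
components of `u` are not both zero. -/
def CategoryII (θ : Fin 3 → ℝ) (R : Matrix (Fin 3) (Fin 3) ℝ) : Prop :=
  ∃ u v : Fin 3 → ℝ, IsLCPSolution θ R u v ∧
    ∃ k j₁ j₂ : Fin 3, j₁ ≠ j₂ ∧ j₁ ≠ k ∧ j₂ ≠ k ∧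
      0 < v k ∧ v j₁ = 0 ∧ v j₂ = 0 ∧
      0 < R j₁ j₁ * R j₂ j₂ - R j₁ j₂ * R j₂ j₁ ∧
      ¬ (u j₁ = 0 ∧ u j₂ = 0)

/-- Category IV: exactly one component of `v` is positive, `det R̂ < 0`, and both
complementary components of `u` are positive. -/
def CategoryIV (θ : Fin 3 → ℝ) (R : Matrix (Fin 3) (Fin 3) ℝ) : Prop :=
  ∃ u v : Fin 3 → ℝ, IsLCPSolution θ R u v ∧
    ∃ k j₁ j₂ : Fin 3, j₁ ≠ j₂ ∧ j₁ ≠ k ∧ j₂ ≠ k ∧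
      0 < v k ∧ v j₁ = 0 ∧ v j₂ = 0 ∧
      R j₁ j₁ * R j₂ j₂ - R j₁ j₂ * R j₂ j₁ < 0 ∧
      0 < u j₁ ∧ 0 < u j₂

/-!
A Category IV solution vanishes at `k` and solves the system on `{j₁, j₂}` whose matrix
`[[1, a], [b, 1]]` has `ab > 1`. The S-property of that block forces `a, b > 0`, hence
`θ j₁ = θ j₂ = -1`, and then `a, b > 1`. If `θ k + R k j > 0` for some `j ∈ {j₁, j₂}`, the unit
vector at `j` is a Category I solution. Otherwise `v k > 0` forces `θ k = 1` and
`R k j₁, R k j₂ ≤ -1`; the S-property of the block on `{j, k}` makes its determinant positive, and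
for `j` minimising `R j k` the solution supported on `{j, k}` has positive slack at the third
coordinate: a Category II solution.
-/

section LCP

variable {d : ℕ} {θ : Fin d → ℝ} {R : Matrix (Fin d) (Fin d) ℝ} {u v : Fin d → ℝ}

theorem IsLCPSolution.mul_eq_zero (h : IsLCPSolution θ R u v) (i : Fin d) : u i * v i = 0 :=
  (Finset.sum_eq_zero_iff_of_nonneg fun j _ => mul_nonneg (h.1 j) (h.2.1 j)).1 h.2.2.2 i
    (Finset.mem_univ i)

theorem isLCPSolution_of_complementary (hu : ∀ i, 0 ≤ u i) (hv : ∀ i, 0 ≤ (θ + R *ᵥ u) i)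
    (hc : ∀ i, u i = 0 ∨ (θ + R *ᵥ u) i = 0) : IsLCPSolution θ R u (θ + R *ᵥ u) :=
  ⟨hu, hv, rfl, Finset.sum_eq_zero fun i _ => by rcases hc i with h | h <;> simp [h]⟩

theorem mulVec_apply_of_support_pair {w : Fin d → ℝ} {i k : Fin d} (hik : i ≠ k)
    (hw : ∀ j, j ≠ i → j ≠ k → w j = 0) (m : Fin d) :
    (R *ᵥ w) m = R m i * w i + R m k * w k := by
  rw [mulVec, dotProduct, ← Finset.sum_subset (Finset.subset_univ {i, k}), Finset.sum_pair hik]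
  intro j _ hj
  simp only [Finset.mem_insert, Finset.mem_singleton, not_or] at hj
  rw [hw j hj.1 hj.2, mul_zero]

theorem CompletelyS.mul_lt_mul_of_nonpos (hS : CompletelyS R) {i k : Fin d} (hik : i ≠ k)
    (hp : R i k ≤ 0) (hc : R k i ≤ 0) : R i k * R k i < R i i * R k k := by
  obtain ⟨w, hw0, hw, hpos⟩ := hS {i, k} ⟨i, by simp⟩
  have hmv := mulVec_apply_of_support_pair (R := R) hik fun j hi hk => hw j (by simp [hi, hk])
  have hi := hpos i (by simp)
  have hk := hpos k (by simp)
  rw [hmv] at hi hk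
  have hwi : 0 < w i := (hw0 i).lt_of_ne' fun h0 => by
    rw [h0, mul_zero, zero_add] at hi; linarith [mul_nonpos_of_nonpos_of_nonneg hp (hw0 k)]
  have hwk : 0 < w k := (hw0 k).lt_of_ne' fun h0 => by
    rw [h0, mul_zero, add_zero] at hk; linarith [mul_nonpos_of_nonpos_of_nonneg hc (hw0 i)]
  have hprod : -R i k * w k * (-R k i * w i) < R i i * w i * (R k k * w k) :=
    mul_lt_mul'' (by linarith) (by linarith) (mul_nonneg (neg_nonneg.2 hp) (hw0 k))
      (mul_nonneg (neg_nonneg.2 hc) (hw0 i))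
  nlinarith [mul_pos hwi hwk]

end LCP

theorem eq_neg_one_of_neg {t : ℝ} (ht : t ∈ ({-1, 0, 1} : Set ℝ)) (h : t < 0) : t = -1 := by
  rcases ht with rfl | rfl | rfl <;> linarith

theorem eq_one_of_pos {t : ℝ} (ht : t ∈ ({-1, 0, 1} : Set ℝ)) (h : 0 < t) : t = 1 := by
  rcases ht with rfl | rfl | rfl <;> linarith

theorem fin3_eq_or_eq_or_eq {i j k : Fin 3} (hij : i ≠ j) (hik : i ≠ k) (hjk : j ≠ k)
    (x : Fin 3) : x = i ∨ x = j ∨ x = k := by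
  revert i j k x; decide

section Fin3

variable {θ : Fin 3 → ℝ} {R : Matrix (Fin 3) (Fin 3) ℝ}

theorem categoryI_of_column {i j k : Fin 3} (hij : i ≠ j) (hik : i ≠ k) (hjk : j ≠ k)
    (hi : θ i + R i i = 0) (hj : 0 < θ j + R j i) (hk : 0 < θ k + R k i) : CategoryI θ R := by
  have hv : ∀ m, (θ + R *ᵥ Pi.single i 1) m = θ m + R m i := by simp [mulVec_single]
  have hcover := fin3_eq_or_eq_or_eq hij hik hjk
  refine ⟨Pi.single i 1, _, isLCPSolution_of_complementary ?_ ?_ ?_, i, by simp, by rw [hv, hi],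
    ?_⟩
  · intro m; by_cases hm : m = i <;> simp [hm]
  · intro m; rcases hcover m with rfl | rfl | rfl <;> rw [hv] <;> linarith
  · intro m; by_cases hm : m = i
    · exact Or.inr (by rw [hv, hm, hi])
    · exact Or.inl (by simp [hm])
  · intro m hm; rcases hcover m with rfl | rfl | rfl
    · exact absurd rfl hm
    · rwa [hv]
    · rwa [hv]

theorem categoryII_of_pair {i k l : Fin 3} (hik : i ≠ k) (hil : i ≠ l) (hkl : k ≠ l) {x y : ℝ}
    (hx : 0 < x) (hy : 0 ≤ y) (hi : θ i + (R i i * x + R i k * y) = 0)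
    (hk : θ k + (R k i * x + R k k * y) = 0) (hl : 0 < θ l + (R l i * x + R l k * y))
    (hdet : 0 < R i i * R k k - R i k * R k i) : CategoryII θ R := by
  have hv : ∀ m, (θ + R *ᵥ (Pi.single i x + Pi.single k y)) m =
      θ m + (R m i * x + R m k * y) := by
    simp [mulVec_add, mulVec_single, mul_comm]
  have hcover := fin3_eq_or_eq_or_eq hik hil hkl
  refine ⟨Pi.single i x + Pi.single k y, _, isLCPSolution_of_complementary ?_ ?_ ?_,
    l, i, k, hik, hil, hkl, by rwa [hv], by rw [hv, hi], by rw [hv, hk], hdet, fun h => hx.ne' ?_⟩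
  · intro m; rcases hcover m with rfl | rfl | rfl <;> simp [hik, hik.symm, hil, hkl, hx.le, hy]
  · intro m; rcases hcover m with rfl | rfl | rfl <;> rw [hv] <;> linarith
  · intro m; rcases hcover m with rfl | rfl | rfl
    · exact Or.inr (by rw [hv, hi])
    · exact Or.inr (by rw [hv, hk])
    · exact Or.inl (by simp [hil.symm, hkl.symm])
  · simpa [hik] using h.1

theorem categoryII_of_unit_diag (hS : CompletelyS R) (hdiag : ∀ i, R i i = 1) {i k l : Fin 3}
    (hik : i ≠ k) (hil : i ≠ l) (hkl : k ≠ l) (hθi : θ i = -1) (hθk : θ k = 1) (hθl : θ l = -1)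
    (hli : 1 < R l i) (hki : R k i ≤ -1) (hle : R i k ≤ R l k) : CategoryII θ R := by
  have hdet_of_nonpos : R i k ≤ 0 → R i k * R k i < 1 := fun h => by
    simpa [hdiag] using hS.mul_lt_mul_of_nonpos hik h (by linarith)
  have hik1 : -1 < R i k := by
    by_contra! h
    nlinarith [hdet_of_nonpos (by linarith),
      mul_nonneg (by linarith : 0 ≤ -1 - R i k) (by linarith : 0 ≤ -1 - R k i)]
  have hD : 0 < 1 - R i k * R k i := by
    rcases le_or_gt (R i k) 0 with h | h
    · linarith [hdet_of_nonpos h]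
    · nlinarith
  -- `(x, y)` solves the system `[[1, R i k], [R k i, 1]] (x, y) = (1, -1)` by Cramer's rule.
  apply categoryII_of_pair hik hil hkl (x := (1 + R i k) / (1 - R i k * R k i))
    (y := (-1 - R k i) / (1 - R i k * R k i)) (div_pos (by linarith) hD)
    (div_nonneg (by linarith) hD.le)
  · rw [hθi, hdiag]; field_simp; ring
  · rw [hθk, hdiag]; field_simp [show 1 - R k i * R i k ≠ 0 by rw [mul_comm]; exact hD.ne']; ring
  · rw [hθl]; field_simp
    nlinarith [mul_nonneg (by linarith : 0 ≤ -1 - R k i) (by linarith : 0 ≤ R l k - R i k)]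
  · rw [hdiag, hdiag]; linarith

theorem CategoryIV.exists_unit_diag (hS : CompletelyS R) (hdiag : ∀ i, R i i = 1)
    (hθ : ∀ i, θ i ∈ ({-1, 0, 1} : Set ℝ)) (hIV : CategoryIV θ R) :
    ∃ k j₁ j₂ : Fin 3, j₁ ≠ j₂ ∧ j₁ ≠ k ∧ j₂ ≠ k ∧ θ j₁ = -1 ∧ θ j₂ = -1 ∧
      1 < R j₁ j₂ ∧ 1 < R j₂ j₁ ∧ ∃ x y : ℝ, 0 ≤ x ∧ 0 ≤ y ∧ x + y < 1 ∧
        0 < θ k + (R k j₁ * x + R k j₂ * y) := by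
  obtain ⟨u, v, hsol, k, j₁, j₂, h12, h1k, h2k, hvk, hv1, hv2, hdet, hu1, hu2⟩ := hIV
  have huk : u k = 0 := (mul_eq_zero.1 (hsol.mul_eq_zero k)).resolve_right hvk.ne'
  have hv : ∀ m, v m = θ m + (R m j₁ * u j₁ + R m j₂ * u j₂) := fun m => by
    rw [hsol.2.2.1, Pi.add_apply, mulVec_apply_of_support_pair h12 fun j h1 h2 => ?_]
    rcases fin3_eq_or_eq_or_eq h12 h1k h2k j with rfl | rfl | rfl
    exacts [absurd rfl h1, absurd rfl h2, huk]
  rw [hv, hdiag] at hv1 hv2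
  rw [hv] at hvk
  rw [hdiag, hdiag, one_mul, sub_neg] at hdet
  have hpos : 0 < R j₁ j₂ ∧ 0 < R j₂ j₁ :=
    (pos_and_pos_or_neg_and_neg_of_mul_pos (by linarith)).resolve_right fun h => by
      have := hS.mul_lt_mul_of_nonpos h12 h.1.le h.2.le
      rw [hdiag, hdiag] at this
      linarith
  have ht1 : θ j₁ = -1 := eq_neg_one_of_neg (hθ j₁) (by nlinarith [mul_pos hpos.1 hu2])
  have ht2 : θ j₂ = -1 := eq_neg_one_of_neg (hθ j₂) (by nlinarith [mul_pos hpos.2 hu1])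
  refine ⟨k, j₁, j₂, h12, h1k, h2k, ht1, ht2, ?_, ?_, u j₁, u j₂, hu1.le, hu2.le, ?_, hvk⟩
  · nlinarith [mul_pos (sub_pos.2 hdet) hu1]
  · nlinarith [mul_pos (sub_pos.2 hdet) hu2]
  · nlinarith [mul_pos (sub_pos.2 hdet) hu2]

end Fin3

theorem stmt6 (R : Matrix (Fin 3) (Fin 3) ℝ) (hS : CompletelyS R)
    (hdiag : ∀ i, R i i = 1)
    (θ : Fin 3 → ℝ) (hθ : ∀ i, θ i ∈ ({-1, 0, 1} : Set ℝ))
    (hIV : CategoryIV θ R) :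
    CategoryI θ R ∨ CategoryII θ R := by
  obtain ⟨k, j₁, j₂, h12, h1k, h2k, ht1, ht2, ha, hb, x, y, hx, hy, hxy, hk⟩ :=
    hIV.exists_unit_diag hS hdiag hθ
  by_cases hc : 0 < θ k + R k j₁
  · exact Or.inl <| categoryI_of_column h12 h1k h2k (by rw [ht1, hdiag]; norm_num)
      (by rw [ht2]; linarith) hc
  by_cases hd : 0 < θ k + R k j₂
  · exact Or.inl <| categoryI_of_column h12.symm h2k h1k (by rw [ht2, hdiag]; norm_num)
      (by rw [ht1]; linarith) hd
  rw [not_lt] at hc hd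
  have htk : θ k = 1 := eq_one_of_pos (hθ k) <| by
    by_contra! h
    nlinarith [mul_le_mul_of_nonneg_right (by linarith : R k j₁ ≤ -θ k) hx,
      mul_le_mul_of_nonneg_right (by linarith : R k j₂ ≤ -θ k) hy,
      mul_nonpos_of_nonpos_of_nonneg h (by linarith : 0 ≤ 1 - x - y)]
  rcases le_total (R j₁ k) (R j₂ k) with h | h
  · exact Or.inr <| categoryII_of_unit_diag hS hdiag h1k h12 h2k.symm ht1 htk ht2 hb
      (by linarith) h
  · exact Or.inr <| categoryII_of_unit_diag hS hdiag h2k h12.symm h1k.symm ht2 htk ht1 ha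
      (by linarith) h
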